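/- Fix 0 < τ < 1 and set m := (1 − τ²)/τ². For ε > 0 with m(e^ε − 1) < 1 define ψ(ε) := √(1 + m²ε²/4) − mε/2 − √(1 − m(e^ε − 1)). Then ψ(ε)/ε² → (m² + m)/4 as ε → 0⁺; in particular ψ(ε) > 0 for all sufficiently small ε > 0, and ψ(ε) = O(ε²) as ε → 0⁺. -/

import Mathlib

open Real Filter

/-- `ψ(ε) = √(1 + m²ε²/4) − mε/2 − √(1 − m(e^ε − 1))`, the (normalized) per-coordinate
standard-deviation gap between one Schrödinger-bridge step and the time-reversed
Ornstein–Uhlenbeck flow with Gaussian marginals, where `m = (1 − τ²)/τ²`. -/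
noncomputable def revOUGap (m ε : ℝ) : ℝ :=
  Real.sqrt (1 + m ^ 2 * ε ^ 2 / 4) - m * ε / 2
    - Real.sqrt (1 - m * (Real.exp ε - 1))

/-!
Rationalizing both square roots gives, for every real `m` and small `ε`,
`ψ(ε) = (m²ε²/4) / (√(1 + m²ε²/4) + 1) + (m(e^ε − 1))² / (2(1 + √(1 − m(e^ε − 1)))²)
  + (m/2)(e^ε − 1 − ε)`,
whose three terms, divided by `ε²`, tend to `m²/8`, `m²/8` and `m/4`. For `0 < τ < 1` we have
`m > 0`, so the limit is positive, which yields both the eventual positivity and the `O(ε²)` bound.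
-/

open Topology

lemma tendsto_exp_sub_one_div : Tendsto (fun x => (exp x - 1) / x) (𝓝[≠] 0) (𝓝 1) := by
  simpa [div_eq_inv_mul] using (hasDerivAt_exp 0).tendsto_slope_zero

lemma tendsto_exp_sub_one_sub_div_sq :
    Tendsto (fun x => (exp x - 1 - x) / x ^ 2) (𝓝[≠] 0) (𝓝 (1 / 2)) := by
  refine HasDerivAt.lhopital_zero_nhdsNE (f' := fun x => exp x - 1) (g' := fun x => 2 * x)
    (.of_forall fun x => ((hasDerivAt_exp x).sub_const 1).sub (hasDerivAt_id x))
    (.of_forall fun x => by simpa using hasDerivAt_pow 2 x)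
    (eventually_mem_nhdsWithin.mono fun x hx => mul_ne_zero two_ne_zero hx) ?_ ?_ ?_
  · exact tendsto_nhdsWithin_of_tendsto_nhds
      (by simpa using (by fun_prop : Continuous fun x => exp x - 1 - x).tendsto 0)
  · exact tendsto_nhdsWithin_of_tendsto_nhds (by simpa using (continuous_pow 2).tendsto (0 : ℝ))
  · simpa [div_mul_eq_div_div_swap, one_div] using tendsto_exp_sub_one_div.div_const 2

lemma sqrt_one_add_sub_one {x : ℝ} (hx : -1 ≤ x) : √(1 + x) - 1 = x / (√(1 + x) + 1) := by
  have hs : √(1 + x) ^ 2 = 1 + x := sq_sqrt (by linarith)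
  rw [eq_div_iff (by positivity)]
  linear_combination hs

lemma one_sub_sqrt_one_sub_sub_half {x : ℝ} (hx : x ≤ 1) :
    1 - √(1 - x) - x / 2 = x ^ 2 / (2 * (1 + √(1 - x)) ^ 2) := by
  have hs : √(1 - x) ^ 2 = 1 - x := sq_sqrt (by linarith)
  rw [eq_div_iff (by positivity)]
  linear_combination (-(2 + 2 * √(1 - x) + x)) * hs

lemma revOUGap_eq {m ε : ℝ} (h : m * (exp ε - 1) ≤ 1) :
    revOUGap m ε = m ^ 2 * ε ^ 2 / 4 / (√(1 + m ^ 2 * ε ^ 2 / 4) + 1)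
      + (m * (exp ε - 1)) ^ 2 / (2 * (1 + √(1 - m * (exp ε - 1))) ^ 2)
      + m / 2 * (exp ε - 1 - ε) := by
  rw [← sqrt_one_add_sub_one (by nlinarith), ← one_sub_sqrt_one_sub_sub_half h, revOUGap]
  ring

lemma tendsto_revOUGap_div_sq (m : ℝ) :
    Tendsto (fun ε => revOUGap m ε / ε ^ 2) (𝓝[≠] 0) (𝓝 ((m ^ 2 + m) / 4)) := by
  have hsqrt {f : ℝ → ℝ} (hf : Continuous f) (h0 : f 0 = 1) :
      Tendsto (fun ε => √(f ε)) (𝓝[≠] 0) (𝓝 1) := by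
    simpa [h0] using tendsto_nhdsWithin_of_tendsto_nhds (hf.sqrt.tendsto 0)
  have hA := hsqrt (f := fun ε => 1 + m ^ 2 * ε ^ 2 / 4) (by fun_prop) (by norm_num)
  have hB := hsqrt (f := fun ε => 1 - m * (exp ε - 1)) (by fun_prop) (by simp)
  have hlim : Tendsto (fun ε => m ^ 2 / 4 / (√(1 + m ^ 2 * ε ^ 2 / 4) + 1)
      + m ^ 2 * ((exp ε - 1) / ε) ^ 2 / (2 * (1 + √(1 - m * (exp ε - 1))) ^ 2)
      + m / 2 * ((exp ε - 1 - ε) / ε ^ 2)) (𝓝[≠] 0)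
      (𝓝 (m ^ 2 / 4 / (1 + 1) + m ^ 2 * 1 ^ 2 / (2 * (1 + 1) ^ 2) + m / 2 * (1 / 2))) :=
    ((tendsto_const_nhds.div (hA.add_const 1) (by norm_num)).add
      ((tendsto_const_nhds.mul (tendsto_exp_sub_one_div.pow 2)).div
        (((hB.const_add 1).pow 2).const_mul 2) (by norm_num))).add
      (tendsto_exp_sub_one_sub_div_sq.const_mul _)
  have hsmall : ∀ᶠ ε in 𝓝[≠] (0 : ℝ), m * (exp ε - 1) ≤ 1 := by
    refine tendsto_nhdsWithin_of_tendsto_nhds ?_ |>.eventually_le_const zero_lt_one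
    simpa using (by fun_prop : Continuous fun ε => m * (exp ε - 1)).tendsto 0
  rw [show (m ^ 2 + m) / 4
      = m ^ 2 / 4 / (1 + 1) + m ^ 2 * 1 ^ 2 / (2 * (1 + 1) ^ 2) + m / 2 * (1 / 2) by ring]
  refine hlim.congr' ?_
  filter_upwards [hsmall, self_mem_nhdsWithin] with ε hε (hε0 : ε ≠ 0)
  rw [revOUGap_eq hε]
  field_simp

lemma exists_forall_pos_of_tendsto_div_sq {f : ℝ → ℝ} {L : ℝ}
    (hf : Tendsto (fun ε => f ε / ε ^ 2) (𝓝[>] 0) (𝓝 L)) (hL : 0 < L) :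
    ∃ ε₁ > (0 : ℝ), ∀ ε : ℝ, 0 < ε → ε < ε₁ → 0 < f ε := by
  obtain ⟨ε₁, hε₁, h⟩ := (nhdsGT_basis 0).eventually_iff.mp (hf.eventually_const_lt hL)
  exact ⟨ε₁, hε₁, fun ε hε hεε₁ => (div_pos_iff_of_pos_right (by positivity)).mp (h ⟨hε, hεε₁⟩)⟩

lemma exists_abs_le_mul_sq_of_tendsto_div_sq {f : ℝ → ℝ} {L : ℝ}
    (hf : Tendsto (fun ε => f ε / ε ^ 2) (𝓝[>] 0) (𝓝 L)) :
    ∃ K > (0 : ℝ), ∃ ε₀ > (0 : ℝ), ∀ ε : ℝ, 0 < ε → ε < ε₀ → |f ε| ≤ K * ε ^ 2 := by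
  obtain ⟨ε₀, hε₀, h⟩ := (nhdsGT_basis 0).eventually_iff.mp
    (hf.abs.eventually_lt_const (lt_add_one |L|))
  refine ⟨|L| + 1, by positivity, ε₀, hε₀, fun ε hε hεε₀ => ?_⟩
  have hε2 : 0 < ε ^ 2 := by positivity
  rw [← div_le_iff₀ hε2, ← abs_of_pos hε2, ← abs_div]
  exact (h ⟨hε, hεε₀⟩).le

/-- For `0 < τ < 1` and `m = (1 − τ²)/τ²`: `ψ(ε)/ε² → (m² + m)/4` as `ε → 0⁺`; in
particular `ψ(ε) > 0` for all sufficiently small `ε > 0` and `ψ(ε) = O(ε²)` as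
`ε → 0⁺`. -/
theorem revOUGap_asymptotics (τ : ℝ) (hτ0 : 0 < τ) (hτ1 : τ < 1) :
    Tendsto (fun ε : ℝ => revOUGap ((1 - τ ^ 2) / τ ^ 2) ε / ε ^ 2)
        (nhdsWithin 0 (Set.Ioi 0))
        (nhds ((((1 - τ ^ 2) / τ ^ 2) ^ 2 + (1 - τ ^ 2) / τ ^ 2) / 4)) ∧
    (∃ ε₁ > (0 : ℝ), ∀ ε : ℝ, 0 < ε → ε < ε₁ →
        0 < revOUGap ((1 - τ ^ 2) / τ ^ 2) ε) ∧
    (∃ K > (0 : ℝ), ∃ ε₀ > (0 : ℝ), ∀ ε : ℝ, 0 < ε → ε < ε₀ →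
        |revOUGap ((1 - τ ^ 2) / τ ^ 2) ε| ≤ K * ε ^ 2) := by
  set m := (1 - τ ^ 2) / τ ^ 2
  have hm : 0 < m := div_pos (by nlinarith) (by positivity)
  have hlim := (tendsto_revOUGap_div_sq m).mono_left
    (nhdsWithin_mono 0 fun ε (hε : 0 < ε) => hε.ne')
  exact ⟨hlim, exists_forall_pos_of_tendsto_div_sq hlim (by positivity),
    exists_abs_le_mul_sq_of_tendsto_div_sq hlim⟩
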